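/- Let K = tr|A|·id + Â with A : E → E invertible self-adjoint on an n-dimensional real inner product space E. For any ω ∈ Λ*E^*, ⟨Kω, ω⟩ ≥ 0, i.e. K is positive semi-definite. -/

import Mathlib

/- We model the exterior algebra `Λ*E^*` of a finite-dimensional real inner product
space `E` by `ExteriorAlgebra ℝ E`, identifying `E ≅ E^*` via the inner product.
`extMul v` is exterior multiplication by `v^*` and `intMul v` is interior
multiplication (contraction) by `v`. -/

open ExteriorAlgebra RealInnerProductSpace

variable {E : Type*} [NormedAddCommGroup E] [InnerProductSpace ℝ E] [FiniteDimensional ℝ E]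

/-- Exterior multiplication `v^* ∧ ·` on `Λ*E^*` (under `E ≅ E^*`). -/
noncomputable def extMul (v : E) : ExteriorAlgebra ℝ E →ₗ[ℝ] ExteriorAlgebra ℝ E :=
  LinearMap.mulLeft ℝ (ExteriorAlgebra.ι ℝ v)

/-- Interior multiplication (contraction) `ι_v` on `Λ*E^*`. -/
noncomputable def intMul (v : E) : ExteriorAlgebra ℝ E →ₗ[ℝ] ExteriorAlgebra ℝ E :=
  CliffordAlgebra.contractLeft ((innerSL ℝ v).toLinearMap)

/-- The Clifford action `c(v) = v^* ∧ · - ι_v`. -/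
noncomputable def cl (v : E) : ExteriorAlgebra ℝ E →ₗ[ℝ] ExteriorAlgebra ℝ E :=
  extMul v - intMul v

/-- The Clifford action `ĉ(v) = v^* ∧ · + ι_v`. -/
noncomputable def hcl (v : E) : ExteriorAlgebra ℝ E →ₗ[ℝ] ExteriorAlgebra ℝ E :=
  extMul v + intMul v

/-- The wedge product `v 0 ∧ v 1 ∧ ⋯ ∧ v (k-1)` in the exterior algebra. -/
noncomputable def wedgeList {k : ℕ} (v : Fin k → E) : ExteriorAlgebra ℝ E :=
  (List.ofFn fun i => ExteriorAlgebra.ι ℝ (v i)).prod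

/-- `B` is the inner product on `Λ*E^*` induced by the inner product of `E`:
it is symmetric, wedge products of vectors pair by the Gram determinant, and
elements of different degrees are orthogonal.  These conditions determine `B`
uniquely, and make wedge products of orthonormal covectors orthonormal. -/
def IsInducedInner (B : ExteriorAlgebra ℝ E →ₗ[ℝ] ExteriorAlgebra ℝ E →ₗ[ℝ] ℝ) : Prop :=
  (∀ x y, B x y = B y x) ∧
  (∀ (k : ℕ) (v w : Fin k → E),
    B (wedgeList v) (wedgeList w) = Matrix.det (Matrix.of fun i j => ⟪v i, w j⟫)) ∧
  (∀ (k l : ℕ) (v : Fin k → E) (w : Fin l → E), k ≠ l →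
    B (wedgeList v) (wedgeList w) = 0)

/-- The operator `Â = Σ_{ij} a_{ij} c(e_i) ĉ(e_j)` associated to a linear map `A`
and a (orthonormal) family `e`, where `a_{ij} = ⟨A e_j, e_i⟩` is the matrix of `A`. -/
noncomputable def hatA {n : ℕ} (e : Fin n → E) (A : E →ₗ[ℝ] E) :
    ExteriorAlgebra ℝ E →ₗ[ℝ] ExteriorAlgebra ℝ E :=
  ∑ i, ∑ j, ⟪A (e j), e i⟫ • (cl (e i) ∘ₗ hcl (e j))

/-- `K = tr|A|·id + Â`, where `tr|A|` is the sum of the absolute values of the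
eigenvalues of the self-adjoint map `A`. -/
noncomputable def Kop {n : ℕ} (hn : Module.finrank ℝ E = n) (e : Fin n → E)
    (A : E →ₗ[ℝ] E) (hA : A.IsSymmetric) :
    ExteriorAlgebra ℝ E →ₗ[ℝ] ExteriorAlgebra ℝ E :=
  (∑ i, |hA.eigenvalues hn i|) • LinearMap.id + hatA e A

/-
Diagonalise `A` in an orthonormal eigenbasis `f` with eigenvalues `μₖ`. The operator `Â` does not
depend on the orthonormal basis used to write it, so `Â = Σₖ μₖ Tₖ` with `Tₖ = c(fₖ) ĉ(fₖ)`.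
Exterior and interior multiplication are adjoint for the induced inner product (Laplace expansion
of the Gram determinant along its first row), so `Tₖ` is self-adjoint, and the Clifford relations
`c(f)² = -1`, `ĉ(f)² = 1`, `c(f) ĉ(f) = -ĉ(f) c(f)` give `Tₖ² = 1`. Hence
`|⟨Tₖ ω, ω⟩| ≤ ⟨ω, ω⟩`, and `⟨K ω, ω⟩ = Σₖ (|μₖ| ⟨ω, ω⟩ + μₖ ⟨Tₖ ω, ω⟩) ≥ 0`.
-/

namespace ExteriorAlgebra

variable {R M : Type*} [CommRing R] [AddCommGroup M] [Module R M]

theorem ι_mul_ιMulti (v : M) {k : ℕ} (u : Fin k → M) :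
    ι R v * ιMulti R k u = ιMulti R (k + 1) (Fin.cons v u) := by
  simp [Matrix.vecTail]

theorem contractLeft_ιMulti_succ (d : Module.Dual R M) {l : ℕ} (w : Fin (l + 1) → M) :
    CliffordAlgebra.contractLeft d (ιMulti R (l + 1) w) =
      ∑ i : Fin (l + 1), ((-1 : R) ^ (i : ℕ) * d (w i)) • ιMulti R l (w ∘ i.succAbove) := by
  induction l with
  | zero => simp [CliffordAlgebra.contractLeft_ι, Algebra.algebraMap_eq_smul_one]
  | succ m ih =>
    have hsucc : ∀ j : Fin (m + 1), ιMulti R (m + 1) (w ∘ j.succ.succAbove) =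
        ι R (w 0) * ιMulti R m (Matrix.vecTail w ∘ j.succAbove) := by
      intro j
      rw [ιMulti_succ_apply]
      congr 2
      ext i
      simp [Matrix.vecTail, Fin.succ_succAbove_succ]
    rw [ιMulti_succ_apply, CliffordAlgebra.contractLeft_ι_mul, ih, Fin.sum_univ_succ (n := m + 1)]
    simp only [hsucc, Finset.mul_sum, mul_smul_comm, Fin.val_succ, pow_succ, Fin.val_zero,
      pow_zero, one_mul, Fin.succAbove_zero]
    simp [Matrix.vecTail, sub_eq_add_neg, ← Finset.sum_neg_distrib, neg_smul]

theorem ext₂_ιMulti {N : Type*} [AddCommGroup N] [Module R N]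
    {F G : ExteriorAlgebra R M →ₗ[R] ExteriorAlgebra R M →ₗ[R] N}
    (h : ∀ (k l : ℕ) (u : Fin k → M) (w : Fin l → M),
      F (ιMulti R k u) (ιMulti R l w) = G (ιMulti R k u) (ιMulti R l w)) :
    F = G :=
  LinearMap.ext_on_range (ιMulti_span R M) fun ⟨k, u⟩ =>
    LinearMap.ext_on_range (ιMulti_span R M) fun ⟨l, w⟩ => h k l u w

end ExteriorAlgebra

theorem abs_apply_self_le_of_involutive {M : Type*} [AddCommGroup M] [Module ℝ M]
    {B : M →ₗ[ℝ] M →ₗ[ℝ] ℝ} (hsymm : ∀ x y, B x y = B y x) (hpos : ∀ x, 0 ≤ B x x)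
    {T : M →ₗ[ℝ] M} (hadj : ∀ x y, B (T x) y = B x (T y)) (hT : ∀ x, T (T x) = x) (x : M) :
    |B (T x) x| ≤ B x x := by
  have hTT : B (T x) (T x) = B x x := by rw [hadj, hT]
  have hplus := hpos (T x + x)
  have hminus := hpos (T x - x)
  simp only [map_add, map_sub, LinearMap.add_apply, LinearMap.sub_apply, hTT, hsymm x (T x)]
    at hplus hminus
  rw [abs_le]
  constructor <;> linarith

section

omit [FiniteDimensional ℝ E]

theorem OrthonormalBasis.sum_apply_self_eq {ι ι' M : Type*} [Fintype ι] [Fintype ι']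
    [AddCommGroup M] [Module ℝ M] (e : OrthonormalBasis ι ℝ E) (f : OrthonormalBasis ι' ℝ E)
    (β : E →ₗ[ℝ] E →ₗ[ℝ] M) : ∑ i, β (e i) (e i) = ∑ k, β (f k) (f k) := by
  calc ∑ i, β (e i) (e i) = ∑ i, ∑ k, β (f k) (⟪f k, e i⟫ • e i) := by
        refine Finset.sum_congr rfl fun i _ ↦ ?_
        nth_rw 1 [← f.sum_repr' (e i)]
        simp only [map_sum, map_smul, LinearMap.sum_apply, LinearMap.smul_apply]
    _ = ∑ k, β (f k) (∑ i, ⟪e i, f k⟫ • e i) := by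
        rw [Finset.sum_comm]
        simp only [map_sum, real_inner_comm]
    _ = ∑ k, β (f k) (f k) := by simp only [e.sum_repr']

theorem OrthonormalBasis.sum_sum_inner_smul_apply {ι M : Type*} [Fintype ι] [AddCommGroup M]
    [Module ℝ M] (e : OrthonormalBasis ι ℝ E) (A : E →ₗ[ℝ] E) (β : E →ₗ[ℝ] E →ₗ[ℝ] M) :
    ∑ i, ∑ j, ⟪A (e j), e i⟫ • β (e i) (e j) = ∑ j, β (A (e j)) (e j) := by
  rw [Finset.sum_comm]
  refine Finset.sum_congr rfl fun j _ ↦ ?_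
  conv_rhs => rw [← e.sum_repr' (A (e j))]
  simp only [map_sum, map_smul, LinearMap.sum_apply, LinearMap.smul_apply, real_inner_comm]

theorem intMul_extMul (v w : E) (x : ExteriorAlgebra ℝ E) :
    intMul w (extMul v x) = ⟪w, v⟫ • x - extMul v (intMul w x) := by
  simpa [intMul, extMul] using
    CliffordAlgebra.contractLeft_ι_mul (d := (innerSL ℝ w).toLinearMap) v x

theorem extMul_extMul (v : E) (x : ExteriorAlgebra ℝ E) : extMul v (extMul v x) = 0 := by
  simp [extMul, ← mul_assoc]

theorem intMul_intMul (v : E) (x : ExteriorAlgebra ℝ E) : intMul v (intMul v x) = 0 :=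
  CliffordAlgebra.contractLeft_contractLeft _ _

theorem intMul_ιMulti_succ (v : E) {l : ℕ} (w : Fin (l + 1) → E) :
    intMul v (ιMulti ℝ (l + 1) w) =
      ∑ i : Fin (l + 1), ((-1 : ℝ) ^ (i : ℕ) * ⟪v, w i⟫) • ιMulti ℝ l (w ∘ i.succAbove) :=
  ExteriorAlgebra.contractLeft_ιMulti_succ _ w

theorem hcl_cl_self (v : E) (x : ExteriorAlgebra ℝ E) : hcl v (cl v x) = -cl v (hcl v x) := by
  simp only [cl, hcl, LinearMap.sub_apply, LinearMap.add_apply, map_add, map_sub,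
    extMul_extMul, intMul_intMul, intMul_extMul]
  abel

theorem cl_cl_self (v : E) (x : ExteriorAlgebra ℝ E) : cl v (cl v x) = -⟪v, v⟫ • x := by
  simp only [cl, LinearMap.sub_apply, map_sub, extMul_extMul, intMul_intMul, intMul_extMul]
  rw [neg_smul]
  abel

theorem hcl_hcl_self (v : E) (x : ExteriorAlgebra ℝ E) : hcl v (hcl v x) = ⟪v, v⟫ • x := by
  simp only [hcl, LinearMap.add_apply, map_add, extMul_extMul, intMul_intMul, intMul_extMul]
  abel

theorem cl_hcl_cl_hcl_self (v : E) (x : ExteriorAlgebra ℝ E) :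
    cl v (hcl v (cl v (hcl v x))) = (⟪v, v⟫ ^ 2) • x := by
  rw [hcl_cl_self, map_neg, cl_cl_self, hcl_hcl_self, smul_smul, ← neg_smul]
  ring_nf

namespace IsInducedInner

variable {B : ExteriorAlgebra ℝ E →ₗ[ℝ] ExteriorAlgebra ℝ E →ₗ[ℝ] ℝ} (hB : IsInducedInner B)
include hB

theorem symm (x y : ExteriorAlgebra ℝ E) : B x y = B y x := hB.1 x y

theorem apply_ιMulti {k : ℕ} (u w : Fin k → E) :
    B (ιMulti ℝ k u) (ιMulti ℝ k w) = (Matrix.of fun i j => ⟪u i, w j⟫).det :=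
  hB.2.1 k u w

theorem apply_ιMulti_of_ne {k l : ℕ} (u : Fin k → E) (w : Fin l → E) (hkl : k ≠ l) :
    B (ιMulti ℝ k u) (ιMulti ℝ l w) = 0 :=
  hB.2.2 k l u w hkl

theorem apply_extMul_ιMulti {k l : ℕ} (v : E) (u : Fin k → E) (w : Fin l → E) :
    B (extMul v (ιMulti ℝ k u)) (ιMulti ℝ l w) = B (ιMulti ℝ k u) (intMul v (ιMulti ℝ l w)) := by
  rw [extMul, LinearMap.mulLeft_apply, ExteriorAlgebra.ι_mul_ιMulti]
  cases l with
  | zero =>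
    rw [ιMulti_zero_apply, intMul, CliffordAlgebra.contractLeft_one, map_zero,
      ← ιMulti_zero_apply (R := ℝ) w, hB.apply_ιMulti_of_ne _ _ (by omega)]
  | succ m =>
    rw [intMul_ιMulti_succ, map_sum]
    obtain rfl | hkm := eq_or_ne k m
    · rw [hB.apply_ιMulti, Matrix.det_succ_row_zero]
      refine Finset.sum_congr rfl fun j _ => ?_
      rw [map_smul, hB.apply_ιMulti, smul_eq_mul]
      simp [Matrix.submatrix, mul_comm, mul_assoc]
    · rw [hB.apply_ιMulti_of_ne _ _ (by omega)]
      simp [hB.apply_ιMulti_of_ne _ _ hkm]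

theorem apply_extMul (v : E) (x y : ExteriorAlgebra ℝ E) :
    B (extMul v x) y = B x (intMul v y) := by
  have h : B ∘ₗ extMul v = B.compl₂ (intMul v) :=
    ExteriorAlgebra.ext₂_ιMulti fun _ _ u w => hB.apply_extMul_ιMulti v u w
  exact LinearMap.congr_fun₂ h x y

theorem apply_intMul (v : E) (x y : ExteriorAlgebra ℝ E) :
    B (intMul v x) y = B x (extMul v y) := by
  rw [hB.symm, ← hB.apply_extMul, hB.symm]

theorem apply_hcl (v : E) (x y : ExteriorAlgebra ℝ E) : B (hcl v x) y = B x (hcl v y) := by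
  simp only [hcl, LinearMap.add_apply, map_add, hB.apply_extMul, hB.apply_intMul]
  ring

theorem apply_cl (v : E) (x y : ExteriorAlgebra ℝ E) : B (cl v x) y = -B x (cl v y) := by
  simp only [cl, LinearMap.sub_apply, map_sub, hB.apply_extMul, hB.apply_intMul]
  ring

theorem apply_cl_hcl (v : E) (x y : ExteriorAlgebra ℝ E) :
    B (cl v (hcl v x)) y = B x (cl v (hcl v y)) := by
  rw [hB.apply_cl, hB.apply_hcl, hcl_cl_self, map_neg, neg_neg]

theorem apply_basis_exteriorAlgebra {ι : Type*} [Fintype ι] [LinearOrder ι]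
    (e : OrthonormalBasis ι ℝ E) (s t : Finset ι) :
    B (e.toBasis.ExteriorAlgebra s) (e.toBasis.ExteriorAlgebra t) = if s = t then 1 else 0 := by
  obtain hcard | hcard := ne_or_eq s.card t.card
  · rw [ExteriorAlgebra.basis_apply, ExteriorAlgebra.basis_apply,
      if_neg (ne_of_apply_ne _ hcard)]
    exact hB.apply_ιMulti_of_ne _ _ hcard
  rw [ExteriorAlgebra.basis_apply_ofCard e.toBasis rfl,
    ExteriorAlgebra.basis_apply_ofCard e.toBasis hcard.symm]
  simp only [ExteriorAlgebra.ιMulti_family, Set.powersetCard.ofFinEmbEquiv_symm_apply]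
  rw [hB.apply_ιMulti]
  simp only [Function.comp_apply, OrthonormalBasis.coe_toBasis, e.inner_eq_ite]
  split_ifs with hst
  · subst hst
    rw [← Matrix.det_one (n := Fin s.card) (R := ℝ)]
    congr 1
    ext i j
    simp [Matrix.one_apply]
  · obtain ⟨a, has, hat⟩ :=
      Finset.not_subset.mp fun h ↦ hst (Finset.eq_of_subset_of_card_le h hcard.ge)
    refine Matrix.det_eq_zero_of_row_eq_zero ((s.orderIsoOfFin rfl).symm ⟨a, has⟩) fun j ↦ ?_
    rw [Matrix.of_apply, if_neg]
    intro h
    simp only [Set.powersetCard.val_ofCard, ← Finset.coe_orderIsoOfFin_apply,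
      OrderIso.apply_symm_apply] at h
    exact hat (h ▸ t.orderEmbOfFin_mem hcard.symm j)

end IsInducedInner

noncomputable def clₗ : E →ₗ[ℝ] Module.End ℝ (ExteriorAlgebra ℝ E) :=
  LinearMap.mul ℝ _ ∘ₗ ι ℝ - CliffordAlgebra.contractLeft ∘ₗ innerₗ E

noncomputable def hclₗ : E →ₗ[ℝ] Module.End ℝ (ExteriorAlgebra ℝ E) :=
  LinearMap.mul ℝ _ ∘ₗ ι ℝ + CliffordAlgebra.contractLeft ∘ₗ innerₗ E

noncomputable def clHcl (ω : ExteriorAlgebra ℝ E) : E →ₗ[ℝ] E →ₗ[ℝ] ExteriorAlgebra ℝ E :=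
  LinearMap.id.compl₁₂ clₗ (LinearMap.applyₗ ω ∘ₗ hclₗ)

theorem clHcl_apply (ω : ExteriorAlgebra ℝ E) (v w : E) : clHcl ω v w = cl v (hcl w ω) := rfl

theorem hatA_apply {n : ℕ} (e : OrthonormalBasis (Fin n) ℝ E) (A : E →ₗ[ℝ] E)
    (ω : ExteriorAlgebra ℝ E) : hatA e A ω = ∑ j, cl (A (e j)) (hcl (e j) ω) := by
  simpa [hatA, clHcl_apply] using e.sum_sum_inner_smul_apply A (clHcl ω)

end

namespace IsInducedInner

variable {B : ExteriorAlgebra ℝ E →ₗ[ℝ] ExteriorAlgebra ℝ E →ₗ[ℝ] ℝ} (hB : IsInducedInner B)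
include hB

theorem apply_self_nonneg (ω : ExteriorAlgebra ℝ E) : 0 ≤ B ω ω := by
  set b := (stdOrthonormalBasis ℝ E).toBasis.ExteriorAlgebra
  rw [← b.sum_repr ω]
  simp only [map_sum, map_smul, LinearMap.sum_apply, LinearMap.smul_apply, smul_eq_mul, b,
    hB.apply_basis_exteriorAlgebra, mul_ite, mul_one, mul_zero, Finset.sum_ite_eq',
    Finset.mem_univ, if_true]
  exact Finset.sum_nonneg fun s _ ↦ mul_self_nonneg _

theorem abs_apply_cl_hcl_le {f : E} (hf : ‖f‖ = 1) (ω : ExteriorAlgebra ℝ E) :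
    |B (cl f (hcl f ω)) ω| ≤ B ω ω :=
  abs_apply_self_le_of_involutive (T := cl f ∘ₗ hcl f) hB.symm hB.apply_self_nonneg
    (hB.apply_cl_hcl f) (fun x ↦ by simp [cl_hcl_cl_hcl_self, hf]) ω

end IsInducedInner

theorem hatA_apply_eq_sum_eigenvalues {n : ℕ} (hn : Module.finrank ℝ E = n)
    (e : OrthonormalBasis (Fin n) ℝ E) {A : E →ₗ[ℝ] E} (hA : A.IsSymmetric)
    (ω : ExteriorAlgebra ℝ E) :
    hatA e A ω = ∑ k, hA.eigenvalues hn k •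
      cl (hA.eigenvectorBasis hn k) (hcl (hA.eigenvectorBasis hn k) ω) := by
  set f := hA.eigenvectorBasis hn
  have hAf (k : Fin n) : A (f k) = hA.eigenvalues hn k • f k := by
    exact_mod_cast hA.apply_eigenvectorBasis hn k
  calc hatA e A ω = ∑ j, (clHcl ω ∘ₗ A) (e j) (e j) := hatA_apply e A ω
    _ = ∑ k, (clHcl ω ∘ₗ A) (f k) (f k) := e.sum_apply_self_eq f _
    _ = _ := by simp only [LinearMap.comp_apply, hAf, map_smul, LinearMap.smul_apply, clHcl_apply]

theorem Kop_nonneg_general {n : ℕ} (hn : Module.finrank ℝ E = n)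
    (e : OrthonormalBasis (Fin n) ℝ E) (A : E →ₗ[ℝ] E)
    (hA : A.IsSymmetric)
    (B : ExteriorAlgebra ℝ E →ₗ[ℝ] ExteriorAlgebra ℝ E →ₗ[ℝ] ℝ)
    (hB : IsInducedInner B) (ω : ExteriorAlgebra ℝ E) :
    0 ≤ B (Kop hn (⇑e) A hA ω) ω := by
  set f := hA.eigenvectorBasis hn
  set μ := hA.eigenvalues hn
  have hK : B (Kop hn e A hA ω) ω =
      ∑ k, (|μ k| * B ω ω + μ k * B (cl (f k) (hcl (f k) ω)) ω) := by
    simp only [Kop, LinearMap.add_apply, LinearMap.smul_apply, LinearMap.id_apply,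
      hatA_apply_eq_sum_eigenvalues hn e hA, map_add, map_smul, map_sum, LinearMap.sum_apply,
      smul_eq_mul, Finset.sum_add_distrib, Finset.sum_mul, f, μ]
  rw [hK]
  refine Finset.sum_nonneg fun k _ ↦ ?_
  have hT := hB.abs_apply_cl_hcl_le (f.orthonormal.1 k) ω
  have hμT := neg_abs_le (μ k * B (cl (f k) (hcl (f k) ω)) ω)
  rw [abs_mul] at hμT
  nlinarith [abs_nonneg (μ k)]

/-- `K = tr|A|·id + Â` is positive semi-definite on `Λ*E^*`: `⟨Kω, ω⟩ ≥ 0` for the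
induced inner product, for `A` invertible and self-adjoint. -/
theorem Kop_nonneg {n : ℕ} (hn : Module.finrank ℝ E = n)
    (e : OrthonormalBasis (Fin n) ℝ E) (A : E →ₗ[ℝ] E)
    (hA : A.IsSymmetric) (hinv : Function.Bijective A)
    (B : ExteriorAlgebra ℝ E →ₗ[ℝ] ExteriorAlgebra ℝ E →ₗ[ℝ] ℝ)
    (hB : IsInducedInner B) (ω : ExteriorAlgebra ℝ E) :
    0 ≤ B (Kop hn (⇑e) A hA ω) ω :=
  Kop_nonneg_general hn e A hA B hB ω
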